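/- Let k ≥ 3 be an integer, let G be a finite simple graph, and let (V_1, …, V_k) be a k-partition of G that maximizes the number of crossing edges e(V_1, …, V_k) and, among all such maximizing k-partitions, has minimum lexicographic order. If i ≠ j are indices with e(V_i) ≥ 2 and e(V_j) = 1, then e(V_i, V_j) ≥ 5. -/

import Mathlib

open Finset

noncomputable def hfun (x : ℝ) : ℝ := Real.sqrt (2 * x + 1 / 4) - 1 / 2

variable {V : Type*} [Fintype V] [DecidableEq V]

/-- Number of edges of `G` with both endpoints in `S`. -/
def eIn (G : SimpleGraph V) [DecidableRel G.Adj] (S : Finset V) : ℕ :=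
  (Finset.univ.filter (fun p : V × V => G.Adj p.1 p.2 ∧ p.1 ∈ S ∧ p.2 ∈ S)).card / 2

/-- Number of edges of `G` with one endpoint in `S` and the other in `T` (for disjoint `S`, `T`). -/
def eCross (G : SimpleGraph V) [DecidableRel G.Adj] (S T : Finset V) : ℕ :=
  (Finset.univ.filter (fun p : V × V => G.Adj p.1 p.2 ∧ p.1 ∈ S ∧ p.2 ∈ T)).card

/-- `P` is a partition of the vertex set into `k` pairwise disjoint (possibly empty) parts. -/
def IsKPartition {k : ℕ} (P : Fin k → Finset V) : Prop :=
  (∀ i j : Fin k, i ≠ j → Disjoint (P i) (P j)) ∧ ∀ v : V, ∃ i, v ∈ P i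

/-- The number of crossing edges of a `k`-partition. -/
def crossTotal (G : SimpleGraph V) [DecidableRel G.Adj] {k : ℕ} (P : Fin k → Finset V) : ℕ :=
  ∑ i : Fin k, ∑ j : Fin k, if i < j then eCross G (P i) (P j) else 0

/-- `f_k(G)`: the maximum number of crossing edges over all `k`-partitions of `G`. -/
noncomputable def maxCut (G : SimpleGraph V) [DecidableRel G.Adj] (k : ℕ) : ℕ :=
  sSup {n : ℕ | ∃ P : Fin k → Finset V, IsKPartition P ∧ crossTotal G P = n}

/-- The values `e(V₁),…,e(V_k)` of a `k`-partition, listed in nonincreasing order. -/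
def lexVals {V : Type*} [Fintype V] [DecidableEq V] (G : SimpleGraph V) [DecidableRel G.Adj]
    {k : ℕ} (P : Fin k → Finset V) : List ℕ :=
  Multiset.sort ((Finset.univ : Finset (Fin k)).val.map fun i => eIn G (P i)) (· ≥ ·)

/-- `Q` is lexicographically smaller than `P`. -/
def LexSmaller {V : Type*} [Fintype V] [DecidableEq V] (G : SimpleGraph V) [DecidableRel G.Adj]
    {k : ℕ} (Q P : Fin k → Finset V) : Prop :=
  List.Lex (· < ·) (lexVals G Q) (lexVals G P)

/-! Maximizing the number of crossing edges is the same as minimizing `innerPairs`, the number of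
ordered adjacent pairs inside the parts. Hence no vertex profits from moving: every `v ∈ V_a` has at
least as many neighbours in any other part `V_b` as in `V_a`. Summed over `V_i` this gives
`e(V_i, V_j) ≥ 2 e(V_i) ≥ 4`, with equality only if every vertex of `V_i` has equally many
neighbours in `V_i` and in `V_j`. In that case, let `z` be an endpoint of an edge inside `V_j` and
`p ∈ V_i` a neighbour of `z`: moving `p` to `V_j` keeps the partition optimal, and then `z` must
still not profit from moving to `V_i`, which forces `z` to have at least three neighbours in `V_i`.
Both endpoints together give `e(V_i, V_j) ≥ 6`. -/

def degIn (G : SimpleGraph V) [DecidableRel G.Adj] (v : V) (S : Finset V) : ℕ :=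
  #{w ∈ S | G.Adj v w}

def innerPairs (G : SimpleGraph V) [DecidableRel G.Adj] {k : ℕ} (P : Fin k → Finset V) : ℕ :=
  ∑ s, eCross G (P s) (P s)

def moveVertex {k : ℕ} (P : Fin k → Finset V) (b : Fin k) (v : V) : Fin k → Finset V :=
  fun s => if s = b then insert v (P s) else (P s).erase v

def IsInnerMin (G : SimpleGraph V) [DecidableRel G.Adj] {k : ℕ} (P : Fin k → Finset V) : Prop :=
  IsKPartition P ∧ ∀ Q : Fin k → Finset V, IsKPartition Q → innerPairs G P ≤ innerPairs G Q

lemma Finset.sum_sum_eq_two_nsmul_sum_lt_add_sum_diag {ι M : Type*} [Fintype ι] [LinearOrder ι]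
    [AddCommMonoid M] (f : ι → ι → M) (hf : ∀ s t, f s t = f t s) :
    ∑ s, ∑ t, f s t = 2 • ∑ s, ∑ t, (if s < t then f s t else 0) + ∑ s, f s s := by
  have hsplit : ∀ s t, f s t = (if s < t then f s t else 0) + (if t < s then f t s else 0) +
      (if s = t then f s t else 0) := by
    intro s t
    rcases lt_trichotomy s t with h | rfl | h
    · simp [h, h.ne, h.not_gt]
    · simp
    · simp [h, h.ne', h.not_gt, hf s t]
  simp_rw [two_nsmul]
  conv_lhs => enter [2, s, 2, t]; rw [hsplit s t]
  simp only [sum_add_distrib, sum_ite_eq, mem_univ, if_true]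
  rw [Finset.sum_comm (f := fun s t => if t < s then f t s else 0)]

section Degrees

omit [Fintype V]

variable {G : SimpleGraph V} [DecidableRel G.Adj]

omit [DecidableEq V] in
lemma degIn_eq_sum (v : V) (S : Finset V) :
    degIn G v S = ∑ w ∈ S, if G.Adj v w then 1 else 0 :=
  card_filter _ _

omit [DecidableEq V] in
lemma degIn_pos_iff {v : V} {S : Finset V} : 0 < degIn G v S ↔ ∃ w ∈ S, G.Adj v w :=
  card_pos.trans filter_nonempty_iff

lemma degIn_insert {v w : V} {S : Finset V} (hw : w ∉ S) :
    degIn G v (insert w S) = degIn G v S + if G.Adj v w then 1 else 0 := by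
  rw [degIn_eq_sum, sum_insert hw, degIn_eq_sum, add_comm]

lemma degIn_erase_add {v w : V} {S : Finset V} (hw : w ∈ S) :
    degIn G v (S.erase w) + (if G.Adj v w then 1 else 0) = degIn G v S := by
  rw [← degIn_insert (notMem_erase w S), insert_erase hw]

lemma degIn_erase_self (v : V) (S : Finset V) : degIn G v (S.erase v) = degIn G v S := by
  simp only [degIn, filter_erase, erase_eq_of_notMem (fun h => G.irrefl (mem_filter.1 h).2)]

end Degrees

section Counting

variable {G : SimpleGraph V} [DecidableRel G.Adj]

lemma eIn_eq_eCross_div_two (S : Finset V) : eIn G S = eCross G S S / 2 := rfl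

omit [DecidableEq V] in
lemma degIn_univ (v : V) : degIn G v univ = G.degree v := by
  rw [← G.card_neighborFinset_eq_degree, G.neighborFinset_eq_filter, degIn]

lemma eCross_eq_sum_degIn_left (S T : Finset V) : eCross G S T = ∑ a ∈ S, degIn G a T := by
  have : ({p : V × V | G.Adj p.1 p.2 ∧ p.1 ∈ S ∧ p.2 ∈ T} : Finset _) =
      {p ∈ S ×ˢ T | G.Adj p.1 p.2} := by
    ext; simp only [mem_filter, mem_univ, mem_product, true_and]; tauto
  simp_rw [eCross, this, card_filter, sum_product, degIn_eq_sum]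

lemma eCross_eq_sum_degIn_right (S T : Finset V) : eCross G S T = ∑ b ∈ T, degIn G b S := by
  have : ({p : V × V | G.Adj p.1 p.2 ∧ p.1 ∈ S ∧ p.2 ∈ T} : Finset _) =
      {p ∈ S ×ˢ T | G.Adj p.1 p.2} := by
    ext; simp only [mem_filter, mem_univ, mem_product, true_and]; tauto
  simp_rw [eCross, this, card_filter, sum_product_right, degIn_eq_sum, G.adj_comm]

lemma eCross_comm (S T : Finset V) : eCross G S T = eCross G T S := by
  rw [eCross_eq_sum_degIn_left, eCross_eq_sum_degIn_right]

lemma eCross_insert_self {v : V} {S : Finset V} (hv : v ∉ S) :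
    eCross G (insert v S) (insert v S) = eCross G S S + 2 * degIn G v S := by
  have hback : ∑ a ∈ S, (if G.Adj a v then 1 else 0) = degIn G v S := by
    simp_rw [degIn_eq_sum, G.adj_comm]
  simp only [eCross_eq_sum_degIn_left, sum_insert hv, degIn_insert hv, sum_add_distrib, hback,
    G.irrefl, if_false]
  ring

lemma eCross_erase_self {v : V} {S : Finset V} (hv : v ∈ S) :
    eCross G S S = eCross G (S.erase v) (S.erase v) + 2 * degIn G v S := by
  conv_lhs => rw [← insert_erase hv]
  rw [eCross_insert_self (notMem_erase v S), degIn_erase_self]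

end Counting

namespace IsKPartition

variable {k : ℕ} {P : Fin k → Finset V}

omit [Fintype V] [DecidableEq V] in
lemma eq_of_mem (hP : IsKPartition P) {v : V} {s t : Fin k} (hs : v ∈ P s) (ht : v ∈ P t) :
    s = t := by
  by_contra h
  exact disjoint_left.1 (hP.1 s t h) hs ht

lemma sum_sum_mem {M : Type*} [AddCommMonoid M] (hP : IsKPartition P) (f : V → M) :
    ∑ s, ∑ a ∈ P s, f a = ∑ a, f a := by
  have hcover : univ.biUnion P = univ := eq_univ_of_forall fun v => by
    obtain ⟨s, hs⟩ := hP.2 v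
    exact mem_biUnion.2 ⟨s, mem_univ s, hs⟩
  rw [← sum_biUnion fun s _ t _ hst => hP.1 s t hst, hcover]

lemma two_mul_crossTotal_add_innerPairs (G : SimpleGraph V) [DecidableRel G.Adj]
    (hP : IsKPartition P) : 2 * crossTotal G P + innerPairs G P = 2 * #G.edgeFinset := by
  have hrow : ∀ a, ∑ t, degIn G a (P t) = G.degree a := fun a => by
    simp_rw [← degIn_univ, degIn_eq_sum]
    exact hP.sum_sum_mem _
  calc 2 * crossTotal G P + innerPairs G P = ∑ s, ∑ t, eCross G (P s) (P t) :=
        (sum_sum_eq_two_nsmul_sum_lt_add_sum_diag _ fun s t => eCross_comm _ _).symm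
    _ = ∑ s, ∑ a ∈ P s, ∑ t, degIn G a (P t) := by
        simp_rw [eCross_eq_sum_degIn_left]
        exact sum_congr rfl fun s _ => sum_comm
    _ = 2 * #G.edgeFinset := by
        simp_rw [hrow]
        rw [hP.sum_sum_mem, G.sum_degrees_eq_twice_card_edges]

section Move

omit [Fintype V]

lemma mem_moveVertex {b s : Fin k} {v w : V} :
    w ∈ moveVertex P b v s ↔ if w = v then s = b else w ∈ P s := by
  unfold moveVertex
  split_ifs <;> simp_all

lemma move (hP : IsKPartition P) (b : Fin k) (v : V) : IsKPartition (moveVertex P b v) := by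
  refine ⟨fun s t hst => disjoint_left.2 fun w hs ht => hst ?_, fun w => ?_⟩
  · rw [mem_moveVertex] at hs ht
    split_ifs at hs ht
    · exact hs.trans ht.symm
    · exact hP.eq_of_mem hs ht
  · by_cases hw : w = v
    · exact ⟨b, by simp [mem_moveVertex, hw]⟩
    · obtain ⟨s, hs⟩ := hP.2 w
      exact ⟨s, by simp [mem_moveVertex, hw, hs]⟩

end Move

end IsKPartition

section Optimality

variable {G : SimpleGraph V} [DecidableRel G.Adj] {k : ℕ} {P : Fin k → Finset V}

lemma crossTotal_le_maxCut (hP : IsKPartition P) : crossTotal G P ≤ maxCut G k := by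
  refine le_csSup ⟨#G.edgeFinset, ?_⟩ ⟨P, hP, rfl⟩
  rintro _ ⟨Q, hQ, rfl⟩
  have := hQ.two_mul_crossTotal_add_innerPairs G
  omega

lemma isInnerMin_of_crossTotal_eq_maxCut (hP : IsKPartition P)
    (hmax : crossTotal G P = maxCut G k) : IsInnerMin G P := by
  refine ⟨hP, fun Q hQ => ?_⟩
  have := hP.two_mul_crossTotal_add_innerPairs G
  have := hQ.two_mul_crossTotal_add_innerPairs G
  have := crossTotal_le_maxCut (G := G) hQ
  omega

lemma innerPairs_moveVertex_add (hP : IsKPartition P) {a b : Fin k} (hab : a ≠ b) {v : V}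
    (hv : v ∈ P a) :
    innerPairs G (moveVertex P b v) + 2 * degIn G v (P a) =
      innerPairs G P + 2 * degIn G v (P b) := by
  have hpart : ∀ s, eCross G (moveVertex P b v s) (moveVertex P b v s) +
      (if s = a then 2 * degIn G v (P a) else 0) =
        eCross G (P s) (P s) + if s = b then 2 * degIn G v (P b) else 0 := by
    intro s
    by_cases hsb : s = b
    · subst hsb
      have hvs : v ∉ P s := fun h => hab (hP.eq_of_mem hv h)
      simp [moveVertex, hab.symm, eCross_insert_self hvs]
    · by_cases hsa : s = a
      · subst hsa
        simp [moveVertex, hsb, ← eCross_erase_self hv]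
      · have hvs : v ∉ P s := fun h => hsa (hP.eq_of_mem h hv)
        simp [moveVertex, hsa, hsb, erase_eq_of_notMem hvs]
  have := sum_congr rfl fun s (_ : s ∈ univ) => hpart s
  simpa only [innerPairs, sum_add_distrib, sum_ite_eq', mem_univ, if_true] using this

namespace IsInnerMin

lemma degIn_le (h : IsInnerMin G P) {a b : Fin k} (hab : a ≠ b) {v : V} (hv : v ∈ P a) :
    degIn G v (P a) ≤ degIn G v (P b) := by
  have := innerPairs_moveVertex_add (G := G) h.1 hab hv
  have := h.2 _ (h.1.move b v)
  omega

lemma move (h : IsInnerMin G P) {a b : Fin k} (hab : a ≠ b) {v : V} (hv : v ∈ P a)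
    (heq : degIn G v (P a) = degIn G v (P b)) : IsInnerMin G (moveVertex P b v) := by
  refine ⟨h.1.move b v, fun Q hQ => ?_⟩
  have := innerPairs_moveVertex_add (G := G) h.1 hab hv
  have := h.2 Q hQ
  omega

/-- Moving `p` across first is free; afterwards `z` has gained a neighbour in its own part and
lost one in the other, so local optimality of `z` costs two. -/
lemma degIn_add_two_le (h : IsInnerMin G P) {a b : Fin k} (hab : a ≠ b) {p z : V}
    (hp : p ∈ P a) (hz : z ∈ P b) (hzp : G.Adj z p)
    (heq : degIn G p (P a) = degIn G p (P b)) :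
    degIn G z (P b) + 2 ≤ degIn G z (P a) := by
  have hpb : p ∉ P b := fun h' => hab (h.1.eq_of_mem hp h')
  have hle := (h.move hab hp heq).degIn_le hab.symm (v := z) (by simp [moveVertex, hz])
  simp only [moveVertex, if_pos, hab, if_false] at hle
  have := degIn_erase_add (G := G) (v := z) hp
  rw [degIn_insert hpb] at hle
  simp only [hzp, if_true] at hle this
  omega

lemma degIn_eq_of_eCross_le (h : IsInnerMin G P) {i j : Fin k} (hij : i ≠ j)
    (hle : eCross G (P i) (P j) ≤ eCross G (P i) (P i)) :
    ∀ p ∈ P i, degIn G p (P i) = degIn G p (P j) := by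
  have hpt : ∀ p ∈ P i, degIn G p (P i) ≤ degIn G p (P j) := fun p hp => h.degIn_le hij hp
  refine (sum_eq_sum_iff_of_le hpt).1 (le_antisymm (sum_le_sum hpt) ?_)
  simpa only [eCross_eq_sum_degIn_left] using hle

lemma six_le_eCross (h : IsInnerMin G P) {i j : Fin k} (hij : i ≠ j)
    (hle : eCross G (P i) (P j) ≤ eCross G (P i) (P i)) {x y : V} (hxy : G.Adj x y)
    (hx : x ∈ P j) (hy : y ∈ P j) : 6 ≤ eCross G (P i) (P j) := by
  have hthree : ∀ z ∈ P j, 0 < degIn G z (P j) → 3 ≤ degIn G z (P i) := by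
    intro z hz hpos
    obtain ⟨p, hp, hzp⟩ := degIn_pos_iff.1 (hpos.trans_le (h.degIn_le hij.symm hz))
    have := h.degIn_add_two_le hij hp hz hzp (h.degIn_eq_of_eCross_le hij hle p hp)
    omega
  have hx3 := hthree x hx (degIn_pos_iff.2 ⟨y, hy, hxy⟩)
  have hy3 := hthree y hy (degIn_pos_iff.2 ⟨x, hx, hxy.symm⟩)
  have hpair : degIn G x (P i) + degIn G y (P i) ≤ ∑ b ∈ P j, degIn G b (P i) := by
    rw [← sum_pair (f := fun b => degIn G b (P i)) hxy.ne]
    exact sum_le_sum_of_subset (insert_subset hx (singleton_subset_iff.2 hy))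
  rw [eCross_eq_sum_degIn_right]
  omega

end IsInnerMin

end Optimality

theorem stmt_19_general {V : Type*} [Fintype V] [DecidableEq V]
    (G : SimpleGraph V) [DecidableRel G.Adj] (k : ℕ)
    (P : Fin k → Finset V) (hP : IsKPartition P)
    (hmax : crossTotal G P = maxCut G k)
    (i j : Fin k) (hij : i ≠ j) (hi : 2 ≤ eIn G (P i)) (hj : eIn G (P j) = 1) :
    5 ≤ eCross G (P i) (P j) := by
  rw [eIn_eq_eCross_div_two] at hi hj
  obtain ⟨x, hx, hpos⟩ : ∃ x ∈ P j, 0 < degIn G x (P j) := by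
    rw [← sum_pos_iff, ← eCross_eq_sum_degIn_left]
    omega
  obtain ⟨y, hy, hxy⟩ := degIn_pos_iff.1 hpos
  by_contra! hlt
  have := (isInnerMin_of_crossTotal_eq_maxCut hP hmax).six_le_eCross hij (by omega) hxy hx hy
  omega

/-- If `(V₁,…,V_k)` maximizes the number of crossing edges and, among all maximizing
`k`-partitions, has minimum lexicographic order, then `e(Vᵢ,Vⱼ) ≥ 5` whenever
`e(Vᵢ) ≥ 2` and `e(Vⱼ) = 1`. -/
theorem stmt_19 {V : Type*} [Fintype V] [DecidableEq V]
    (G : SimpleGraph V) [DecidableRel G.Adj] (k : ℕ) (hk : 3 ≤ k)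
    (P : Fin k → Finset V) (hP : IsKPartition P)
    (hmax : crossTotal G P = maxCut G k)
    (hmin : ∀ Q : Fin k → Finset V, IsKPartition Q → crossTotal G Q = maxCut G k →
      ¬ LexSmaller G Q P)
    (i j : Fin k) (hij : i ≠ j) (hi : 2 ≤ eIn G (P i)) (hj : eIn G (P j) = 1) :
    5 ≤ eCross G (P i) (P j) :=
  stmt_19_general G k P hP hmax i j hij hi hj
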